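/- arXiv:2209.11713 — 2 statements merged into one kernel-verified Lean document; each statement's English description precedes it below -/
import Mathlib

section
/- Let d, r ≥ 1, let h_j : ℝᵈ → ℝ for j = 1,…,r be continuous, let η : [0,1] → ℝᵈ be continuous with each composition h_j ∘ η differentiable on [0,1], let m : [0,1] → ℝ be continuous with m(s) > 0 for all s ∈ [0,1], and let c_j > 0 for j = 1,…,r. Define Z := {y ∈ ℝᵈ : h_j(y) ≤ 0 for all j = 1,…,r}. Suppose (i) for every s ∈ [0,1] with η(s) ∈ Z and every j, the derivative of h_j ∘ η at s is at most c_j · m(s), and (ii) h_j(η(0)) + c_j · ∫₀¹ m(s) ds ≤ 0 for every j. Then η(s) ∈ Z for every s ∈ [0,1], i.e., h_j(η(s)) ≤ 0 for all s ∈ [0,1] and all j = 1,…,r. -/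
open Set Filter Topology

/-- analytic core of Proposition 2: if the tightened constraints hold at the
    start of the curve, and while the curve is in the constraint set `Z` the growth rate of
    each constraint function along the curve is at most `c_j · m(s)`, then the whole curve
    stays in `Z`. -/
theorem curve_stays_in_constraint_set
    (d r : ℕ) (hd : 1 ≤ d) (hr : 1 ≤ r)
    (h : Fin r → (Fin d → ℝ) → ℝ) (hcont : ∀ j, Continuous (h j))
    (η : ℝ → (Fin d → ℝ)) (hη : ContinuousOn η (Icc (0:ℝ) 1))
    (D : Fin r → ℝ → ℝ)
    (hD : ∀ j, ∀ s ∈ Icc (0:ℝ) 1,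
      HasDerivWithinAt (fun s => h j (η s)) (D j s) (Icc (0:ℝ) 1) s)
    (m : ℝ → ℝ) (hm : ContinuousOn m (Icc (0:ℝ) 1))
    (hmpos : ∀ s ∈ Icc (0:ℝ) 1, 0 < m s)
    (c : Fin r → ℝ) (hc : ∀ j, 0 < c j)
    (hrate : ∀ s ∈ Icc (0:ℝ) 1, (∀ j, h j (η s) ≤ 0) →
      ∀ j, D j s ≤ c j * m s)
    (hinit : ∀ j, h j (η 0) + c j * ∫ s in (0:ℝ)..1, m s ≤ 0) :
    ∀ s ∈ Icc (0:ℝ) 1, ∀ j, h j (η s) ≤ 0 := by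
  -- extend `m` to a continuous function on all of ℝ via the projection onto [0,1]
  set m' : ℝ → ℝ := fun t => m (max 0 (min 1 t)) with hm'def
  have hproj : ∀ t : ℝ, max 0 (min 1 t) ∈ Icc (0:ℝ) 1 := by
    intro t
    exact ⟨le_max_left _ _, max_le zero_le_one (min_le_left _ _)⟩
  have hm'c : Continuous m' :=
    hm.comp_continuous (continuous_const.max (continuous_const.min continuous_id)) hproj
  have hm'eq : ∀ t ∈ Icc (0:ℝ) 1, m' t = m t := by
    intro t ht
    simp only [hm'def, min_eq_right ht.2, max_eq_right ht.1]
  have hm'pos : ∀ t : ℝ, 0 < m' t := fun t => hmpos _ (hproj t)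
  set M : ℝ → ℝ := fun t => ∫ u in (0:ℝ)..t, m' u with hMdef
  have hMderiv : ∀ t : ℝ, HasDerivAt M (m' t) t := fun t =>
    (hm'c.integral_hasStrictDerivAt 0 t).hasDerivAt
  have hMcont : Continuous M :=
    continuous_iff_continuousAt.2 fun x => (hMderiv x).continuousAt
  have hM0 : M 0 = 0 := intervalIntegral.integral_same
  have hM1 : M 1 = ∫ s in (0:ℝ)..1, m s := by
    apply intervalIntegral.integral_congr
    intro t ht
    rw [uIcc_of_le zero_le_one] at ht
    exact hm'eq t ht
  have hMlt : ∀ a : ℝ, a < 1 → M a < M 1 := by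
    intro a ha
    have hadd : M a + ∫ u in a..1, m' u = M 1 :=
      intervalIntegral.integral_add_adjacent_intervals
        (hm'c.intervalIntegrable _ _) (hm'c.intervalIntegrable _ _)
    have hpos : 0 < ∫ u in a..1, m' u :=
      intervalIntegral.intervalIntegral_pos_of_pos
        (hm'c.intervalIntegrable _ _) hm'pos ha
    linarith
  have hM1pos : 0 < M 1 := by have := hMlt 0 one_pos; linarith [hM0]
  -- continuity of each constraint along the curve
  have hgc : ∀ j, ContinuousOn (fun t => h j (η t)) (Icc (0:ℝ) 1) :=
    fun j => (hcont j).comp_continuousOn hη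
  -- key estimate: if constraints hold on [0,a], then h j (η a) ≤ h j (η 0) + c j * M a
  have key : ∀ a ∈ Icc (0:ℝ) 1, (∀ t ∈ Icc (0:ℝ) a, ∀ j, h j (η t) ≤ 0) →
      ∀ j, h j (η a) ≤ h j (η 0) + c j * M a := by
    intro a ha hZ j
    rcases eq_or_lt_of_le ha.1 with h0a | h0a
    · rw [← h0a, hM0]; linarith
    have hsub : Icc (0:ℝ) a ⊆ Icc (0:ℝ) 1 := Icc_subset_Icc le_rfl ha.2
    have hmono : MonotoneOn (fun t => c j * M t - h j (η t)) (Icc (0:ℝ) a) := by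
      apply monotoneOn_of_hasDerivWithinAt_nonneg (convex_Icc 0 a)
        (f' := fun t => c j * m' t - D j t)
      · exact ((hMcont.const_smul (c j)).continuousOn).sub ((hgc j).mono hsub)
      · intro x hx
        have hx' : x ∈ Ioo (0:ℝ) a := by rwa [interior_Icc] at hx
        have hx1 : x ∈ Icc (0:ℝ) 1 := hsub ⟨hx'.1.le, hx'.2.le⟩
        exact (((hMderiv x).const_mul (c j)).hasDerivWithinAt).sub
          ((hD j x hx1).mono (by rw [interior_Icc]; exact Ioo_subset_Icc_self.trans hsub))
      · intro x hx
        rw [interior_Icc] at hx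
        have hx1 : x ∈ Icc (0:ℝ) 1 := hsub ⟨hx.1.le, hx.2.le⟩
        have hZx : ∀ j, h j (η x) ≤ 0 := hZ x ⟨hx.1.le, hx.2.le⟩
        have := hrate x hx1 hZx j
        rw [hm'eq x hx1]
        linarith
    have h0mem : (0:ℝ) ∈ Icc (0:ℝ) a := ⟨le_rfl, ha.1⟩
    have hamem : a ∈ Icc (0:ℝ) a := ⟨ha.1, le_rfl⟩
    have := hmono h0mem hamem ha.1
    simp only [hM0] at this
    linarith
  -- the set of times up to which all constraints hold
  set S : Set ℝ := {a : ℝ | a ∈ Icc (0:ℝ) 1 ∧ ∀ t ∈ Icc (0:ℝ) a, ∀ j, h j (η t) ≤ 0}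
    with hSdef
  have hinit0 : ∀ j, h j (η 0) < 0 := by
    intro j
    have := hinit j
    rw [← hM1] at this
    nlinarith [hc j, hM1pos]
  have hS0 : (0:ℝ) ∈ S := by
    refine ⟨⟨le_rfl, zero_le_one⟩, fun t ht j => ?_⟩
    have : t = 0 := le_antisymm ht.2 ht.1
    rw [this]; exact (hinit0 j).le
  have hSne : S.Nonempty := ⟨0, hS0⟩
  have hSbdd : BddAbove S := ⟨1, fun a haS => haS.1.2⟩
  set σ : ℝ := sSup S with hσdef
  have hσ0 : 0 ≤ σ := le_csSup hSbdd hS0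
  have hσ1 : σ ≤ 1 := csSup_le hSne fun a haS => haS.1.2
  have hltσ : ∀ t, 0 ≤ t → t < σ → ∀ j, h j (η t) ≤ 0 := by
    intro t ht0 htσ j
    obtain ⟨b, hbS, htb⟩ := exists_lt_of_lt_csSup hSne htσ
    exact hbS.2 t ⟨ht0, htb.le⟩ j
  have hσS : σ ∈ S := by
    refine ⟨⟨hσ0, hσ1⟩, fun t ht j => ?_⟩
    rcases lt_or_eq_of_le ht.2 with htσ | htσ
    · exact hltσ t ht.1 htσ j
    subst htσ
    rcases eq_or_lt_of_le hσ0 with h0σ | h0σ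
    · rw [← h0σ]; exact (hinit0 j).le
    -- take the limit from the left
    have hne : (𝓝[Ico (0:ℝ) σ] σ).NeBot := by
      rw [← mem_closure_iff_nhdsWithin_neBot, closure_Ico h0σ.ne]
      exact ⟨hσ0, le_rfl⟩
    have htend : Filter.Tendsto (fun t => h j (η t)) (nhdsWithin σ (Ico (0:ℝ) σ))
        (nhds (h j (η σ))) := by
      have := (hgc j).continuousWithinAt (x := σ) ⟨hσ0, hσ1⟩
      exact this.mono_left (nhdsWithin_mono σ (Ico_subset_Icc_self.trans
        (Icc_subset_Icc le_rfl hσ1)))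
    haveI := hne
    refine le_of_tendsto htend ?_
    filter_upwards [self_mem_nhdsWithin] with t htI
    exact hltσ t htI.1 htI.2 j
  have hσeq : σ = 1 := by
    by_contra hne1
    have hσlt : σ < 1 := lt_of_le_of_ne hσ1 hne1
    have hstrict : ∀ j, h j (η σ) < 0 := by
      intro j
      have h1 := key σ ⟨hσ0, hσ1⟩ hσS.2 j
      have h2 := hMlt σ hσlt
      have h3 := hinit j
      rw [← hM1] at h3
      nlinarith [hc j]
    -- find a neighborhood within [0,1] where all constraints are strictly negative
    have hev : ∀ᶠ t in nhdsWithin σ (Icc (0:ℝ) 1), ∀ j, h j (η t) < 0 := by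
      rw [Filter.eventually_all]
      intro j
      exact ((hgc j).continuousWithinAt ⟨hσ0, hσ1⟩).eventually_lt_const (hstrict j)
    rw [Filter.eventually_iff, Metric.mem_nhdsWithin_iff] at hev
    obtain ⟨ε, hε, hball⟩ := hev
    set b : ℝ := min 1 (σ + ε / 2) with hbdef
    have hσb : σ < b := lt_min hσlt (by linarith)
    have hbS : b ∈ S := by
      refine ⟨⟨le_trans hσ0 hσb.le, min_le_left _ _⟩, fun t ht j => ?_⟩
      rcases le_or_gt t σ with htσ | htσ
      · exact hσS.2 t ⟨ht.1, htσ⟩ j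
      · have htb : t ≤ σ + ε / 2 := le_trans ht.2 (min_le_right _ _)
        have ht1 : t ≤ 1 := le_trans ht.2 (min_le_left _ _)
        have : t ∈ Metric.ball σ ε ∩ Icc (0:ℝ) 1 := by
          constructor
          · rw [Metric.mem_ball, Real.dist_eq, abs_of_pos (by linarith)]
            linarith
          · exact ⟨ht.1, ht1⟩
        exact (hball this j).le
    exact absurd (le_csSup hSbdd hbS) (not_le.2 hσb)
  intro s hs j
  exact hσS.2 s (by rw [hσeq]; exact hs) j
end

section
/- Let I be a nonempty finite index set, a ∈ ℝ, b_i ∈ ℝ and c_i ≥ 0 for i ∈ I, and let δ̄ ≥ 0 satisfy −a·δ̄ + max_{i ∈ I}(b_i·δ̄ + c_i) ≤ 0. Let δ : [0,∞) → ℝ be differentiable with δ'(t) = −a·δ(t) + max_{i ∈ I}(b_i·δ(t) + c_i) for all t ≥ 0 and δ(0) ∈ [0, δ̄]. Then δ(t) ∈ [0, δ̄] for all t ≥ 0. -/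
open Set

/-- Scalar invariance lemma: if `f 0 ≤ 0` and `f' t ≤ L * f t` whenever `f t ≥ 0`,
then `f` stays nonpositive on `[0, ∞)`. -/
lemma nonpos_invariance_of_deriv_le
    (f f' : ℝ → ℝ) (L : ℝ)
    (hf : ∀ t ∈ Ici (0:ℝ), HasDerivWithinAt f (f' t) (Ici (0:ℝ)) t)
    (hbound : ∀ t ∈ Ici (0:ℝ), 0 ≤ f t → f' t ≤ L * f t)
    (h0 : f 0 ≤ 0) : ∀ t ∈ Ici (0:ℝ), f t ≤ 0 := by
  have hcontIci : ContinuousOn f (Ici (0:ℝ)) :=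
    fun t ht => (hf t ht).continuousWithinAt
  intro T hT
  by_contra h
  push_neg at h
  have hT0 : (0:ℝ) ≤ T := hT
  -- the set of times in [0, T] where f ≤ 0
  set S : Set ℝ := {t | t ∈ Icc (0:ℝ) T ∧ f t ≤ 0} with hS
  have hSsub : S ⊆ Icc (0:ℝ) T := fun t ht => ht.1
  have hSne : S.Nonempty := ⟨0, ⟨le_refl 0, hT0⟩, h0⟩
  have hSbdd : BddAbove S := ⟨T, fun t ht => ht.1.2⟩
  have hSclosed : IsClosed S := by
    have hcont : ContinuousOn f (Icc (0:ℝ) T) := hcontIci.mono Icc_subset_Ici_self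
    have : S = Icc (0:ℝ) T ∩ f ⁻¹' (Iic 0) := by
      ext t
      simp only [hS, mem_setOf_eq, mem_inter_iff, mem_preimage, mem_Iic]
    rw [this]
    exact (hcont.preimage_isClosed_of_isClosed isClosed_Icc isClosed_Iic)
  set s := sSup S with hs
  have hsS : s ∈ S := hSclosed.csSup_mem hSne hSbdd
  have hs0 : (0:ℝ) ≤ s := hsS.1.1
  have hsT : s ≤ T := hsS.1.2
  have hfs : f s ≤ 0 := hsS.2
  have hsltT : s < T := by
    rcases lt_or_eq_of_le hsT with h' | h'
    · exact h'
    · exfalso; rw [h'] at hfs; linarith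
  -- for t in (s, T], f t > 0
  have hpos : ∀ t, s < t → t ≤ T → 0 < f t := by
    intro t hst htT
    by_contra hle
    push_neg at hle
    have : t ∈ S := ⟨⟨le_trans hs0 hst.le, htT⟩, hle⟩
    exact absurd (le_csSup hSbdd this) (not_le.mpr hst)
  -- f s = 0
  have hfs0 : 0 ≤ f s := by
    by_contra hneg
    push_neg at hneg
    -- f tends to f s < 0 along 𝓝[>] s, but f > 0 just right of s
    have hcw : ContinuousWithinAt f (Ioi s) s :=
      ((hf s hs0).continuousWithinAt).mono (fun x hx => le_trans hs0 (le_of_lt hx))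
    have hev : ∀ᶠ x in nhdsWithin s (Ioi s), f x < 0 :=
      hcw.eventually_lt_const hneg
    have hev2 : ∀ᶠ x in nhdsWithin s (Ioi s), x < T := by
      filter_upwards [Ioo_mem_nhdsGT_of_mem ⟨le_refl s, hsltT⟩] with x hx
      exact hx.2
    have : ∀ᶠ x in nhdsWithin s (Ioi s), False := by
      filter_upwards [hev, hev2, self_mem_nhdsWithin] with x hx1 hx2 hx3
      exact absurd (hpos x hx3 hx2.le) (not_lt.mpr hx1.le)
    exact (this.exists.elim fun x hx => hx)
  -- apply Grönwall on [s, T] with f s = 0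
  have hGron : ∀ x ∈ Icc s T, f x ≤ gronwallBound 0 L 0 (x - s) := by
    apply le_gronwallBound_of_liminf_deriv_right_le (f' := f')
    · exact hcontIci.mono (fun x hx => le_trans hs0 hx.1)
    · intro x hx r hr
      have hx0 : (0:ℝ) ≤ x := le_trans hs0 hx.1
      have hd : HasDerivWithinAt f (f' x) (Ici x) x :=
        (hf x hx0).mono (fun y hy => le_trans hx0 hy)
      exact hd.liminf_right_slope_le hr
    · linarith
    · intro x hx
      have hx0 : (0:ℝ) ≤ x := le_trans hs0 hx.1
      have hfx : 0 ≤ f x := by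
        rcases eq_or_lt_of_le hx.1 with h' | h'
        · rw [← h']; exact hfs0
        · exact (hpos x h' hx.2.le).le
      have := hbound x hx0 hfx
      linarith
  have := hGron T ⟨hsT, le_refl T⟩
  rw [gronwallBound_ε0_δ0] at this
  linarith

/-- forward invariance of `[0, δ̄]` for the scalar tube dynamics
    `δ' = −a·δ + maxᵢ (bᵢ·δ + cᵢ)` with nonnegative offsets `cᵢ`, provided the right-hand
    side is nonpositive at `δ̄`. -/
theorem tube_scaling_interval_invariance
    (ι : Type*) [Fintype ι] [Nonempty ι]
    (a : ℝ) (b c : ι → ℝ) (hc : ∀ i, 0 ≤ c i)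
    (δbar : ℝ) (hδbar : 0 ≤ δbar)
    (hstat : -a * δbar + Finset.univ.sup' Finset.univ_nonempty
        (fun i => b i * δbar + c i) ≤ 0)
    (δ δ' : ℝ → ℝ)
    (hδ : ∀ t ∈ Ici (0:ℝ), HasDerivWithinAt δ (δ' t) (Ici (0:ℝ)) t)
    (hδ' : ∀ t ∈ Ici (0:ℝ), δ' t = -a * δ t + Finset.univ.sup' Finset.univ_nonempty
        (fun i => b i * δ t + c i))
    (h0 : δ 0 ∈ Icc (0:ℝ) δbar) :
    ∀ t ∈ Ici (0:ℝ), δ t ∈ Icc (0:ℝ) δbar := by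
  classical
  set B : ℝ := Finset.univ.sup' Finset.univ_nonempty (fun i => |b i|) with hB
  have hBi : ∀ i : ι, |b i| ≤ B := fun i =>
    Finset.le_sup' (fun i => |b i|) (Finset.mem_univ i)
  set L : ℝ := |a| + B with hL
  set M : ℝ := Finset.univ.sup' Finset.univ_nonempty (fun i => b i * δbar + c i) with hM
  have hMi : ∀ i : ι, b i * δbar + c i ≤ M := fun i =>
    Finset.le_sup' (fun i => b i * δbar + c i) (Finset.mem_univ i)
  -- Upper bound: apply invariance to f = δ - δbar
  have hupper : ∀ t ∈ Ici (0:ℝ), δ t - δbar ≤ 0 := by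
    apply nonpos_invariance_of_deriv_le (fun t => δ t - δbar) δ' L
    · intro t ht
      exact (hδ t ht).sub_const δbar
    · intro t ht hge
      rw [hδ' t ht]
      have hdge : δbar ≤ δ t := by linarith
      have hsup : Finset.univ.sup' Finset.univ_nonempty (fun i => b i * δ t + c i)
          ≤ M + B * (δ t - δbar) := by
        apply Finset.sup'_le
        intro i _
        have h1 : b i * δ t + c i = (b i * δbar + c i) + b i * (δ t - δbar) := by ring
        have h2 : b i * (δ t - δbar) ≤ B * (δ t - δbar) := by
          apply mul_le_mul_of_nonneg_right _ (by linarith)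
          exact le_trans (le_abs_self _) (hBi i)
        rw [h1]
        have := hMi i
        linarith
      have h3 : -a * δ t ≤ -a * δbar + |a| * (δ t - δbar) := by
        have : -a * (δ t - δbar) ≤ |a| * (δ t - δbar) := by
          apply mul_le_mul_of_nonneg_right _ (by linarith)
          exact le_trans (neg_le_abs a) (le_refl _)
        nlinarith
      have : -a * δ t + Finset.univ.sup' Finset.univ_nonempty (fun i => b i * δ t + c i)
          ≤ (-a * δbar + M) + L * (δ t - δbar) := by
        rw [hL]; nlinarith
      calc -a * δ t + Finset.univ.sup' Finset.univ_nonempty (fun i => b i * δ t + c i)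
          ≤ (-a * δbar + M) + L * (δ t - δbar) := this
        _ ≤ L * (δ t - δbar) := by linarith [hstat]
    · linarith [h0.2]
  -- Lower bound: apply invariance to f = -δ
  have hlower : ∀ t ∈ Ici (0:ℝ), -δ t ≤ 0 := by
    apply nonpos_invariance_of_deriv_le (fun t => -δ t) (fun t => -δ' t) L
    · intro t ht
      exact (hδ t ht).neg
    · intro t ht hge
      have hdle : δ t ≤ 0 := by linarith
      rw [hδ' t ht]
      obtain ⟨i0⟩ := ‹Nonempty ι›
      have hsup : b i0 * δ t + c i0 ≤
          Finset.univ.sup' Finset.univ_nonempty (fun i => b i * δ t + c i) :=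
        Finset.le_sup' (fun i => b i * δ t + c i) (Finset.mem_univ i0)
      -- need: -(-a * δ t + sup) ≤ L * (-δ t), i.e. -a δt + sup ≥ -L(-δt) = L δt
      have h1 : (b i0 - a) * δ t ≤ -a * δ t + (b i0 * δ t + c i0) := by
        have := hc i0; nlinarith
      have h2 : L * δ t ≤ (b i0 - a) * δ t := by
        apply mul_le_mul_of_nonpos_right _ hdle
        have h3 : b i0 - a ≤ |b i0| + |a| := by
          have := le_abs_self (b i0)
          have := neg_le_abs a
          linarith
        have := hBi i0
        rw [hL]; linarith
      have : L * δ t ≤ -a * δ t + Finset.univ.sup' Finset.univ_nonempty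
          (fun i => b i * δ t + c i) := by linarith
      linarith
    · linarith [h0.1]
  intro t ht
  exact ⟨by linarith [hlower t ht], by linarith [hupper t ht]⟩
end
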